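/- arXiv:1806.03641 — 8 statements merged into one kernel-verified Lean document; each statement's English description precedes it below -/
import Mathlib

section
/- Let $\{\omega_j\}_{j=0}^{n}$ be real numbers with $\omega_0 > 0$, $\omega_j \le 0$ for all $1 \le j \le n$, and $\sum_{j=0}^{n} \omega_j \ge 0$. Then for any vectors $x_0, x_1, \dots, x_n$ in a real inner product space, $\sum_{j=0}^{n} \omega_{n-j} \|x_j\|^2 \le 2 \langle x_n, \sum_{j=0}^{n} \omega_{n-j} x_j \rangle$. -/
/-! Polarizing each term around `xₙ`, i.e. `2⟪xₙ, xⱼ⟫ - ‖xⱼ‖² = ‖xₙ‖² - ‖xₙ - xⱼ‖²`, turns the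
right-hand side minus the left-hand side into `(∑ ωⱼ) ‖xₙ‖² - ∑ⱼ<ₙ ωₙ₋ⱼ ‖xₙ - xⱼ‖²`, which is
nonnegative because `∑ ωⱼ ≥ 0` and `ωₙ₋ⱼ ≤ 0` for `j < n`. -/

open Finset RealInnerProductSpace

section

variable {ι E : Type*} [NormedAddCommGroup E] [InnerProductSpace ℝ E]

theorem two_mul_inner_sum_smul_sub_sum_mul_norm_sq (s : Finset ι) (c : ι → ℝ) (y : ι → E)
    (z : E) :
    2 * ⟪z, ∑ i ∈ s, c i • y i⟫ - ∑ i ∈ s, c i * ‖y i‖ ^ 2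
      = (∑ i ∈ s, c i) * ‖z‖ ^ 2 - ∑ i ∈ s, c i * ‖z - y i‖ ^ 2 := by
  simp only [← sum_sub_distrib, sum_mul, mul_sum, inner_sum, real_inner_smul_right,
    norm_sub_sq_real]
  exact sum_congr rfl fun i _ ↦ by ring

theorem sum_mul_norm_sq_le_two_mul_inner_sum_smul {s : Finset ι} {c : ι → ℝ} {y : ι → E}
    {i₀ : ι} (hc : 0 ≤ ∑ i ∈ s, c i) (hneg : ∀ i ∈ s, i ≠ i₀ → c i ≤ 0) :
    ∑ i ∈ s, c i * ‖y i‖ ^ 2 ≤ 2 * ⟪y i₀, ∑ i ∈ s, c i • y i⟫ := by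
  have hdist : ∑ i ∈ s, c i * ‖y i₀ - y i‖ ^ 2 ≤ 0 := by
    refine sum_nonpos fun i hi ↦ ?_
    rcases eq_or_ne i i₀ with rfl | hi₀
    · simp
    · exact mul_nonpos_of_nonpos_of_nonneg (hneg i hi hi₀) (sq_nonneg _)
  have hnorm : 0 ≤ (∑ i ∈ s, c i) * ‖y i₀‖ ^ 2 := mul_nonneg hc (sq_nonneg _)
  linarith [two_mul_inner_sum_smul_sub_sum_mul_norm_sq s c y (y i₀)]

end

theorem discrete_energy_inequality_general {E : Type*} [NormedAddCommGroup E] [InnerProductSpace ℝ E]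
    (n : ℕ) (ω : ℕ → ℝ)
    (hωneg : ∀ j, 1 ≤ j → j ≤ n → ω j ≤ 0)
    (hsum : 0 ≤ ∑ j ∈ Finset.range (n + 1), ω j)
    (x : ℕ → E) :
    ∑ j ∈ Finset.range (n + 1), ω (n - j) * ‖x j‖ ^ 2
      ≤ 2 * (inner ℝ (x n) (∑ j ∈ Finset.range (n + 1), ω (n - j) • x j) : ℝ) := by
  refine sum_mul_norm_sq_le_two_mul_inner_sum_smul ?_ fun j hj hjn ↦ ?_
  · simpa using (sum_range_reflect ω (n + 1)).symm ▸ hsum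
  · have := mem_range.mp hj
    exact hωneg _ (by omega) (by omega)

theorem discrete_energy_inequality {E : Type*} [NormedAddCommGroup E] [InnerProductSpace ℝ E]
    (n : ℕ) (ω : ℕ → ℝ) (hω0 : 0 < ω 0)
    (hωneg : ∀ j, 1 ≤ j → j ≤ n → ω j ≤ 0)
    (hsum : 0 ≤ ∑ j ∈ Finset.range (n + 1), ω j)
    (x : ℕ → E) :
    ∑ j ∈ Finset.range (n + 1), ω (n - j) * ‖x j‖ ^ 2
      ≤ 2 * (inner ℝ (x n) (∑ j ∈ Finset.range (n + 1), ω (n - j) • x j) : ℝ) :=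
  discrete_energy_inequality_general n ω hωneg hsum x
end

section
/- Let $f : \mathbb{R}^d \to \mathbb{R}^d$ satisfy the one-sided Lipschitz condition $\langle f(x) - f(y), x - y \rangle \le \lambda \|x-y\|^2$ for all $x, y$, with $\lambda \le 0$. Let weights $\{\omega_j\}$ satisfy $\omega_0 > 0$, $\omega_j \le 0$ for $j \ge 1$, and $\sum_{j=0}^n \omega_j \ge 0$ for all $n \ge 1$. If $(x_n)$ and $(y_n)$ are two sequences satisfying $\sum_{j=0}^{n} \omega_{n-j} x_j = h^{\alpha} f(x_n)$ and $\sum_{j=0}^{n} \omega_{n-j} y_j = h^{\alpha} f(y_n)$ for all $n \ge 1$ with $h > 0$, then setting $z_n = x_n - y_n$, the inequality $(\omega_0 - 2\lambda h^{\alpha})\|z_n\|^2 \le \sum_{j=0}^{n-1} |\omega_{n-j}| \, \|z_j\|^2$ holds for all $n \ge 1$. -/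
/-!
Write `z = x - y`. Subtracting the two schemes gives `∑ ω_{n-j} z_j = h^α (f x_n - f y_n)`,
so by the one-sided Lipschitz condition `⟪z_n, ∑ ω_{n-j} z_j⟫ ≤ λ h^α ‖z_n‖²`. On the other hand,
since the weights `ω_{n-j}`, `j < n`, are nonpositive, `2 ω_{n-j} ⟪z_n, z_j⟫ ≥ ω_{n-j} (‖z_n‖² + ‖z_j‖²)`,
and summing (using `∑ ω_j ≥ 0`) gives the discrete energy inequality
`∑ ω_{n-j} ‖z_j‖² ≤ 2 ⟪z_n, ∑ ω_{n-j} z_j⟫`. Comparing the two bounds and moving the history terms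
to the right-hand side gives the claim.
-/

open Finset RealInnerProductSpace

section EnergyInequality

variable {E : Type*} [NormedAddCommGroup E] [InnerProductSpace ℝ E]

lemma mul_norm_sq_add_norm_sq_le_two_mul_inner {c : ℝ} (hc : c ≤ 0) (u v : E) :
    c * (‖u‖ ^ 2 + ‖v‖ ^ 2) ≤ 2 * c * ⟪u, v⟫ := by
  nlinarith [norm_sub_sq_real u v, sq_nonneg ‖u - v‖]

theorem sum_mul_norm_sq_le_two_inner_sum_smul {ω : ℕ → ℝ} {n : ℕ}
    (hωneg : ∀ j, 1 ≤ j → ω j ≤ 0) (hsum : 0 ≤ ∑ j ∈ range (n + 1), ω j) (z : ℕ → E) :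
    ∑ j ∈ range (n + 1), ω (n - j) * ‖z j‖ ^ 2
      ≤ 2 * ⟪z n, ∑ j ∈ range (n + 1), ω (n - j) • z j⟫ := by
  have hterm : ∀ j ∈ range (n + 1),
      ω (n - j) * (‖z n‖ ^ 2 + ‖z j‖ ^ 2) ≤ 2 * ω (n - j) * ⟪z n, z j⟫ := by
    intro j hj
    rcases Nat.lt_or_ge j n with hjn | hjn
    · exact mul_norm_sq_add_norm_sq_le_two_mul_inner (hωneg _ (by omega)) _ _
    · obtain rfl : j = n := by simp only [mem_range] at hj; omega
      rw [real_inner_self_eq_norm_sq]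
      linarith
  have hreflect : ∑ j ∈ range (n + 1), ω (n - j) = ∑ j ∈ range (n + 1), ω j :=
    sum_range_reflect ω (n + 1)
  calc ∑ j ∈ range (n + 1), ω (n - j) * ‖z j‖ ^ 2
      ≤ (∑ j ∈ range (n + 1), ω j) * ‖z n‖ ^ 2 + ∑ j ∈ range (n + 1), ω (n - j) * ‖z j‖ ^ 2 :=
        le_add_of_nonneg_left (mul_nonneg hsum (sq_nonneg _))
    _ = ∑ j ∈ range (n + 1), ω (n - j) * (‖z n‖ ^ 2 + ‖z j‖ ^ 2) := by
        rw [← hreflect, sum_mul, ← sum_add_distrib]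
        simp only [mul_add]
    _ ≤ ∑ j ∈ range (n + 1), 2 * ω (n - j) * ⟪z n, z j⟫ := sum_le_sum hterm
    _ = 2 * ⟪z n, ∑ j ∈ range (n + 1), ω (n - j) • z j⟫ := by
        simp only [inner_sum, real_inner_smul_right, mul_sum, mul_assoc]

end EnergyInequality

theorem fbdf_contractivity_recursion_general {d : ℕ}
    (f : EuclideanSpace ℝ (Fin d) → EuclideanSpace ℝ (Fin d)) (lam : ℝ)
    (hf : ∀ x y, (inner ℝ (f x - f y) (x - y) : ℝ) ≤ lam * ‖x - y‖ ^ 2)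
    (ω : ℕ → ℝ) (hωneg : ∀ j, 1 ≤ j → ω j ≤ 0)
    (hsum : ∀ n : ℕ, 1 ≤ n → 0 ≤ ∑ j ∈ Finset.range (n + 1), ω j)
    (h α : ℝ) (hh : 0 < h)
    (x y : ℕ → EuclideanSpace ℝ (Fin d))
    (hx : ∀ n : ℕ, 1 ≤ n → ∑ j ∈ Finset.range (n + 1), ω (n - j) • x j = h ^ α • f (x n))
    (hy : ∀ n : ℕ, 1 ≤ n → ∑ j ∈ Finset.range (n + 1), ω (n - j) • y j = h ^ α • f (y n)) :
    ∀ n : ℕ, 1 ≤ n →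
      (ω 0 - 2 * lam * h ^ α) * ‖x n - y n‖ ^ 2
        ≤ ∑ j ∈ Finset.range n, |ω (n - j)| * ‖x j - y j‖ ^ 2 := by
  intro n hn
  set z := fun j => x j - y j
  have hscheme : ∑ j ∈ range (n + 1), ω (n - j) • z j = h ^ α • (f (x n) - f (y n)) := by
    simp only [z, smul_sub, sum_sub_distrib, hx n hn, hy n hn]
  have hlip : ⟪z n, ∑ j ∈ range (n + 1), ω (n - j) • z j⟫ ≤ h ^ α * (lam * ‖z n‖ ^ 2) := by
    rw [hscheme, real_inner_smul_right, real_inner_comm]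
    exact mul_le_mul_of_nonneg_left (hf _ _) (Real.rpow_pos_of_pos hh α).le
  have hhistory : ∑ j ∈ range n, ω (n - j) * ‖z j‖ ^ 2
      = -∑ j ∈ range n, |ω (n - j)| * ‖z j‖ ^ 2 := by
    rw [← sum_neg_distrib]
    refine sum_congr rfl fun j hj => ?_
    rw [abs_of_nonpos (hωneg _ (by simp only [mem_range] at hj; omega))]
    ring
  have henergy := sum_mul_norm_sq_le_two_inner_sum_smul hωneg (hsum n hn) z
  rw [sum_range_succ, Nat.sub_self, hhistory] at henergy
  change (ω 0 - 2 * lam * h ^ α) * ‖z n‖ ^ 2 ≤ ∑ j ∈ range n, |ω (n - j)| * ‖z j‖ ^ 2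
  linarith

theorem fbdf_contractivity_recursion {d : ℕ}
    (f : EuclideanSpace ℝ (Fin d) → EuclideanSpace ℝ (Fin d)) (lam : ℝ) (hlam : lam ≤ 0)
    (hf : ∀ x y, (inner ℝ (f x - f y) (x - y) : ℝ) ≤ lam * ‖x - y‖ ^ 2)
    (ω : ℕ → ℝ) (hω0 : 0 < ω 0) (hωneg : ∀ j, 1 ≤ j → ω j ≤ 0)
    (hsum : ∀ n : ℕ, 1 ≤ n → 0 ≤ ∑ j ∈ Finset.range (n + 1), ω j)
    (h α : ℝ) (hh : 0 < h)
    (x y : ℕ → EuclideanSpace ℝ (Fin d))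
    (hx : ∀ n : ℕ, 1 ≤ n → ∑ j ∈ Finset.range (n + 1), ω (n - j) • x j = h ^ α • f (x n))
    (hy : ∀ n : ℕ, 1 ≤ n → ∑ j ∈ Finset.range (n + 1), ω (n - j) • y j = h ^ α • f (y n)) :
    ∀ n : ℕ, 1 ≤ n →
      (ω 0 - 2 * lam * h ^ α) * ‖x n - y n‖ ^ 2
        ≤ ∑ j ∈ Finset.range n, |ω (n - j)| * ‖x j - y j‖ ^ 2 :=
  fbdf_contractivity_recursion_general f lam hf ω hωneg hsum h α hh x y hx hy
end

section
/- Let $f : \mathbb{R}^d \to \mathbb{R}^d$ satisfy $\langle f(x), x \rangle \le a - b\|x\|^2$ for all $x$, with $a \ge 0$ and $b > 0$. Let weights $\{\omega_j\}$ satisfy $\omega_0 > 0$, $\omega_j \le 0$ for $j \ge 1$, and $\sum_{j=0}^n \omega_j \ge 0$ for all $n \ge 1$. If $(x_n)$ satisfies $\sum_{j=0}^{n} \omega_{n-j} x_j = h^{\alpha} f(x_n)$ for $n \ge 1$ with $h^\alpha > 0$, then $(\omega_0 + 2bh^{\alpha})\|x_n\|^2 \le 2h^{\alpha} a + \sum_{j=0}^{n-1}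 |\omega_{n-j}|\,\|x_j\|^2$ for all $n \ge 1$. -/
/-!
Pair the scheme at step `n` with `2 xₙ`. Since `2 ⟪u, v⟫ ≥ -(‖u‖² + ‖v‖²)`, each history term
costs at most `|ω_{n-j}| (‖x_j‖² + ‖xₙ‖²)`, and the weight condition `∑_{k ≤ n} ω_k ≥ 0` with
`ω_k ≤ 0` for `k ≥ 1` says the total weight of the history is at most `ω₀`. Hence the left side is
at least `ω₀ ‖xₙ‖² - ∑_{j<n} |ω_{n-j}| ‖x_j‖²`, while dissipativity bounds the right side
`2 h^α ⟪f xₙ, xₙ⟫` by `2 h^α (a - b ‖xₙ‖²)`.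
-/

open Finset

section

variable {E : Type*} [NormedAddCommGroup E] [InnerProductSpace ℝ E]

theorem neg_abs_mul_add_norm_sq_le_two_mul_inner (c : ℝ) (u v : E) :
    -(|c| * (‖u‖ ^ 2 + ‖v‖ ^ 2)) ≤ 2 * (c * inner ℝ u v) := by
  have hinner : 2 * |inner ℝ u v| ≤ ‖u‖ ^ 2 + ‖v‖ ^ 2 :=
    calc 2 * |inner ℝ u v| ≤ 2 * ‖u‖ * ‖v‖ := by
          rw [mul_assoc]; gcongr; exact abs_real_inner_le_norm u v
      _ ≤ ‖u‖ ^ 2 + ‖v‖ ^ 2 := two_mul_le_add_sq _ _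
  have hscaled := mul_le_mul_of_nonneg_left hinner (abs_nonneg c)
  linarith [neg_abs_le (c * inner ℝ u v), abs_mul c (inner ℝ u v)]

theorem sum_range_abs_le_of_nonpos_of_sum_nonneg {ω : ℕ → ℝ} {n : ℕ} (hωneg : ∀ j, 1 ≤ j → ω j ≤ 0)
    (hsum : 0 ≤ ∑ j ∈ range (n + 1), ω j) :
    ∑ j ∈ range n, |ω (n - j)| ≤ ω 0 := by
  have hreflect : ∑ j ∈ range n, |ω (n - j)| = ∑ j ∈ range n, -ω (j + 1) := by
    rw [← sum_range_reflect (fun j => -ω (j + 1)) n]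
    refine sum_congr rfl fun j hj => ?_
    have hj : j < n := mem_range.mp hj
    rw [abs_of_nonpos (hωneg _ (by omega))]
    congr 2
    omega
  rw [hreflect, sum_neg_distrib]
  rw [sum_range_succ'] at hsum
  linarith

theorem sub_sum_abs_mul_norm_sq_le_two_mul_inner {ω : ℕ → ℝ} {n : ℕ}
    (hωneg : ∀ j, 1 ≤ j → ω j ≤ 0) (hsum : 0 ≤ ∑ j ∈ range (n + 1), ω j) (x : ℕ → E) :
    ω 0 * ‖x n‖ ^ 2 - ∑ j ∈ range n, |ω (n - j)| * ‖x j‖ ^ 2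
      ≤ 2 * inner ℝ (∑ j ∈ range (n + 1), ω (n - j) • x j) (x n) := by
  have hpair : inner ℝ (∑ j ∈ range (n + 1), ω (n - j) • x j) (x n)
      = ∑ j ∈ range n, ω (n - j) * inner ℝ (x j) (x n) + ω 0 * ‖x n‖ ^ 2 := by
    simp only [sum_range_succ, inner_add_left, sum_inner, real_inner_smul_left, Nat.sub_self,
      real_inner_self_eq_norm_sq]
  have hcross : ∑ j ∈ range n, -(|ω (n - j)| * (‖x j‖ ^ 2 + ‖x n‖ ^ 2))
      ≤ ∑ j ∈ range n, 2 * (ω (n - j) * inner ℝ (x j) (x n)) :=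
    sum_le_sum fun j _ => neg_abs_mul_add_norm_sq_le_two_mul_inner _ _ _
  have hweight := mul_le_mul_of_nonneg_right (sum_range_abs_le_of_nonpos_of_sum_nonneg hωneg hsum)
    (sq_nonneg ‖x n‖)
  simp only [mul_add, neg_add, sum_add_distrib, sum_neg_distrib, ← sum_mul, ← mul_sum] at hcross
  linarith

end

theorem fbdf_dissipativity_recursion_general {d : ℕ}
    (f : EuclideanSpace ℝ (Fin d) → EuclideanSpace ℝ (Fin d)) (a b : ℝ)
    (hf : ∀ x, (inner ℝ (f x) x : ℝ) ≤ a - b * ‖x‖ ^ 2)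
    (ω : ℕ → ℝ) (hωneg : ∀ j, 1 ≤ j → ω j ≤ 0)
    (hsum : ∀ n : ℕ, 1 ≤ n → 0 ≤ ∑ j ∈ Finset.range (n + 1), ω j)
    (hα : ℝ) (hhα : 0 < hα)
    (x : ℕ → EuclideanSpace ℝ (Fin d))
    (hx : ∀ n : ℕ, 1 ≤ n → ∑ j ∈ Finset.range (n + 1), ω (n - j) • x j = hα • f (x n)) :
    ∀ n : ℕ, 1 ≤ n →
      (ω 0 + 2 * b * hα) * ‖x n‖ ^ 2
        ≤ 2 * hα * a + ∑ j ∈ Finset.range n, |ω (n - j)| * ‖x j‖ ^ 2 := by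
  intro n hn
  have henergy := sub_sum_abs_mul_norm_sq_le_two_mul_inner hωneg (hsum n hn) x
  rw [hx n hn, real_inner_smul_left] at henergy
  have hdiss := mul_le_mul_of_nonneg_left (hf (x n)) hhα.le
  linarith

theorem fbdf_dissipativity_recursion {d : ℕ}
    (f : EuclideanSpace ℝ (Fin d) → EuclideanSpace ℝ (Fin d)) (a b : ℝ)
    (ha : 0 ≤ a) (hb : 0 < b)
    (hf : ∀ x, (inner ℝ (f x) x : ℝ) ≤ a - b * ‖x‖ ^ 2)
    (ω : ℕ → ℝ) (hω0 : 0 < ω 0) (hωneg : ∀ j, 1 ≤ j → ω j ≤ 0)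
    (hsum : ∀ n : ℕ, 1 ≤ n → 0 ≤ ∑ j ∈ Finset.range (n + 1), ω j)
    (hα : ℝ) (hhα : 0 < hα)
    (x : ℕ → EuclideanSpace ℝ (Fin d))
    (hx : ∀ n : ℕ, 1 ≤ n → ∑ j ∈ Finset.range (n + 1), ω (n - j) • x j = hα • f (x n)) :
    ∀ n : ℕ, 1 ≤ n →
      (ω 0 + 2 * b * hα) * ‖x n‖ ^ 2
        ≤ 2 * hα * a + ∑ j ∈ Finset.range n, |ω (n - j)| * ‖x j‖ ^ 2 :=
  fbdf_dissipativity_recursion_general f a b hf ω hωneg hsum hα hhα x hx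
end

section
/- Let $f : \mathbb{R} \to \mathbb{R}$ satisfy $f(x)\,x \le \lambda x^2$ for all $x$ with $\lambda < 0$. Let weights $\{\omega_j\}$ satisfy $\omega_0 > 0$, $\omega_j \le 0$ for $j \ge 1$, and $\sum_{j=0}^n \omega_j \ge 0$ for all $n$. Suppose $(x_n)$ satisfies $\sum_{j=0}^{n} \omega_{n-j} x_j = h^{\alpha} f(x_n)$ for all $n \ge 1$ with $h^\alpha > 0$, and $x_0 > 0$. Then $x_n \ge 0$ for all $n \ge 0$. -/
theorem fbdf_nonnegativity_preservation
    (f : ℝ → ℝ) (lam : ℝ) (hlam : lam < 0)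
    (hf : ∀ x : ℝ, f x * x ≤ lam * x ^ 2)
    (ω : ℕ → ℝ) (hω0 : 0 < ω 0) (hωneg : ∀ j, 1 ≤ j → ω j ≤ 0)
    (hsum : ∀ n : ℕ, 0 ≤ ∑ j ∈ Finset.range (n + 1), ω j)
    (hα : ℝ) (hhα : 0 < hα)
    (x : ℕ → ℝ)
    (hx : ∀ n : ℕ, 1 ≤ n → ∑ j ∈ Finset.range (n + 1), ω (n - j) * x j = hα * f (x n))
    (hx0 : 0 < x 0) :
    ∀ n : ℕ, 0 ≤ x n := by
  intro n
  induction n using Nat.strong_induction_on with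
  | _ n ih =>
    rcases Nat.eq_zero_or_pos n with h0 | h1
    · subst h0; exact hx0.le
    · by_contra hneg
      push_neg at hneg
      have hxeq := hx n h1
      rw [Finset.sum_range_succ, Nat.sub_self] at hxeq
      have hS : ∑ j ∈ Finset.range n, ω (n - j) * x j ≤ 0 := by
        apply Finset.sum_nonpos
        intro j hj
        simp only [Finset.mem_range] at hj
        exact mul_nonpos_of_nonpos_of_nonneg (hωneg _ (by omega)) (ih j hj)
      have h2 : hα * (f (x n) * x n) ≤ hα * (lam * x n ^ 2) :=
        mul_le_mul_of_nonneg_left (hf (x n)) hhα.le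
      nlinarith [mul_nonneg (neg_nonneg.mpr hS) (neg_nonneg.mpr hneg.le),
        mul_pos hω0 (mul_pos_of_neg_of_neg hneg hneg),
        mul_pos hhα (neg_pos.mpr hlam), mul_pos_of_neg_of_neg hneg hneg]
end

section
/- Let $x \in C([0,T]) \cap C^1((0,T])$ and suppose $x$ attains its minimum over $(0,T]$ at a point $t_1 \in (0,T]$ with $x(t_1) \le x(0)$. Then the Caputo fractional derivative satisfies $^{C}_{0}D^{\alpha}_{t} x(t_1) = \frac{1}{\Gamma(1-\alpha)} \int_0^{t_1} (t_1 - \tau)^{-\alpha} x'(\tau)\, d\tau \le 0$ for any $0 < \alpha < 1$. -/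
open Set Filter Topology MeasureTheory

/-! Integrating by parts against the weight `(t₁ - τ) ^ (-α)` on `[0, u]`, `u < t₁`, the boundary
term at `0` and the integral of `(x τ - x t₁) * α (t₁ - τ) ^ (-α - 1)` are nonnegative at a minimum,
so `∫ τ in 0..u, (t₁ - τ) ^ (-α) * x' τ ≤ (x u - x t₁) * (t₁ - u) ^ (-α)`. Differentiability at `t₁`
makes the right side `O((t₁ - u) ^ (1 - α))`, so letting `u → t₁⁻` gives the claim. -/

theorem tendsto_sub_mul_rpow_neg_nhdsLT {x : ℝ → ℝ} {d c α : ℝ} (hx : HasDerivAt x d c)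
    (hα : α < 1) :
    Tendsto (fun u => (x u - x c) * (c - u) ^ (-α)) (𝓝[<] c) (𝓝 0) := by
  have hslope : Tendsto (slope x c) (𝓝[<] c) (𝓝 d) :=
    (hasDerivAt_iff_tendsto_slope.mp hx).mono_left (nhdsWithin_mono _ fun _ h => ne_of_lt h)
  have hpow : Tendsto (fun u => (c - u) ^ (1 - α)) (𝓝[<] c) (𝓝 0) := by
    have : ContinuousAt (fun u => (c - u) ^ (1 - α)) c :=
      (Real.continuousAt_rpow_const _ _ (Or.inr (by linarith))).comp
        (continuous_const.sub continuous_id).continuousAt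
    simpa [Real.zero_rpow (by linarith : (1 - α) ≠ 0)]
      using this.tendsto.mono_left nhdsWithin_le_nhds
  -- `(x u - x c) * (c - u) ^ (-α) = -slope x c u * (c - u) ^ (1 - α)`
  have hprod := hslope.neg.mul hpow
  rw [mul_zero] at hprod
  refine hprod.congr' ?_
  filter_upwards [self_mem_nhdsWithin] with u (hu : u < c)
  have hcu : 0 < c - u := sub_pos.mpr hu
  rw [slope_def_field, sub_eq_add_neg (1 : ℝ), Real.rpow_add hcu, Real.rpow_one]
  field_simp [(sub_neg.mpr hu).ne]
  ring

theorem integral_rpow_neg_mul_deriv_le {x x' : ℝ → ℝ} {a u c α : ℝ} (hau : a ≤ u) (huc : u < c)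
    (hα : 0 ≤ α) (hcont : ContinuousOn x (Icc a u))
    (hderiv : ∀ τ ∈ Ioo a u, HasDerivAt x (x' τ) τ)
    (hint : IntervalIntegrable (fun τ => (c - τ) ^ (-α) * x' τ) volume a u)
    (hmin : ∀ τ ∈ Icc a u, x c ≤ x τ) :
    ∫ τ in a..u, (c - τ) ^ (-α) * x' τ ≤ (x u - x c) * (c - u) ^ (-α) := by
  set p : ℝ → ℝ := fun τ => (x τ - x c) * (α * (c - τ) ^ (-α - 1))
  have hpos : ∀ τ ∈ Icc a u, 0 < c - τ := fun τ hτ => by linarith [hτ.2]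
  have hweight (β : ℝ) : ContinuousOn (fun τ => (c - τ) ^ β) (Icc a u) :=
    (continuousOn_const.sub continuousOn_id).rpow_const fun τ hτ => Or.inl (hpos τ hτ).ne'
  have hp_int : IntervalIntegrable p volume a u :=
    ContinuousOn.intervalIntegrable_of_Icc hau <|
      (hcont.sub continuousOn_const).mul (continuousOn_const.mul (hweight _))
  have hp_nonneg : 0 ≤ ∫ τ in a..u, p τ :=
    intervalIntegral.integral_nonneg hau fun τ hτ =>
      mul_nonneg (sub_nonneg.mpr (hmin τ hτ)) (mul_nonneg hα (Real.rpow_nonneg (hpos τ hτ).le _))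
  have hIBP : ∫ τ in a..u, ((c - τ) ^ (-α) * x' τ + p τ) =
      (x u - x c) * (c - u) ^ (-α) - (x a - x c) * (c - a) ^ (-α) := by
    refine intervalIntegral.integral_eq_sub_of_hasDerivAt_of_le hau
      ((hcont.sub continuousOn_const).mul (hweight _)) (fun τ hτ => ?_) (hint.add hp_int)
    have hw : HasDerivAt (fun s => (c - s) ^ (-α)) (α * (c - τ) ^ (-α - 1)) τ := by
      have := ((hasDerivAt_id' τ).const_sub c).rpow_const (p := -α)
        (Or.inl (hpos τ (Ioo_subset_Icc_self hτ)).ne')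
      convert this using 1
      ring
    exact (((hderiv τ hτ).sub_const (x c)).mul hw).congr_deriv (by ring)
  have hxa : 0 ≤ (x a - x c) * (c - a) ^ (-α) :=
    mul_nonneg (sub_nonneg.mpr (hmin a (left_mem_Icc.mpr hau)))
      (Real.rpow_nonneg (hpos a (left_mem_Icc.mpr hau)).le _)
  rw [intervalIntegral.integral_add hint hp_int] at hIBP
  linarith

theorem caputo_nonpos_at_min_general (T α : ℝ) (hα0 : 0 < α) (hα1 : α < 1)
    (x x' : ℝ → ℝ)
    (hcont : ContinuousOn x (Icc 0 T))
    (hderiv : ∀ t ∈ Ioc (0 : ℝ) T, HasDerivAt x (x' t) t)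
    (t₁ : ℝ) (ht₁ : t₁ ∈ Ioc (0 : ℝ) T)
    (hmin : ∀ t ∈ Ioc (0 : ℝ) T, x t₁ ≤ x t)
    (hmin0 : x t₁ ≤ x 0) :
    (1 / Real.Gamma (1 - α)) * ∫ τ in (0 : ℝ)..t₁, (t₁ - τ) ^ (-α) * x' τ ≤ 0 := by
  obtain ⟨ht₁0, ht₁T⟩ := ht₁
  refine mul_nonpos_of_nonneg_of_nonpos
    (one_div_nonneg.mpr (Real.Gamma_pos_of_pos (by linarith)).le) ?_
  set f : ℝ → ℝ := fun τ => (t₁ - τ) ^ (-α) * x' τ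
  -- a non-integrable `f` has the junk integral `0`
  by_cases hint : IntervalIntegrable f volume 0 t₁
  swap
  · rw [intervalIntegral.integral_undef hint]
  have hmin' : ∀ τ ∈ Icc 0 t₁, x t₁ ≤ x τ := fun τ hτ =>
    hτ.1.eq_or_lt.elim (fun h => h ▸ hmin0) fun h => hmin τ ⟨h, hτ.2.trans ht₁T⟩
  have hprimitive :
      Tendsto (fun u => ∫ τ in (0 : ℝ)..u, f τ) (𝓝[<] t₁) (𝓝 (∫ τ in (0 : ℝ)..t₁, f τ)) :=
    ((intervalIntegral.continuousOn_primitive_interval' hint left_mem_uIcc) t₁ right_mem_uIcc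
      |>.mono_of_mem_nhdsWithin (by simpa [uIcc_of_le ht₁0.le] using Icc_mem_nhdsLT ht₁0)).tendsto
  have hbound : ∀ᶠ u in 𝓝[<] t₁, ∫ τ in (0 : ℝ)..u, f τ ≤ (x u - x t₁) * (t₁ - u) ^ (-α) := by
    filter_upwards [Ioo_mem_nhdsLT ht₁0] with u ⟨hu0, hut⟩
    exact integral_rpow_neg_mul_deriv_le hu0.le hut hα0.le
      (hcont.mono (Icc_subset_Icc le_rfl (hut.le.trans ht₁T)))
      (fun τ hτ => hderiv τ ⟨hτ.1, by linarith [hτ.2]⟩)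
      (hint.mono_set (uIcc_subset_uIcc left_mem_uIcc (mem_uIcc_of_le hu0.le hut.le)))
      (fun τ hτ => hmin' τ ⟨hτ.1, hτ.2.trans hut.le⟩)
  exact le_of_tendsto_of_tendsto hprimitive
    (tendsto_sub_mul_rpow_neg_nhdsLT (hderiv t₁ ⟨ht₁0, ht₁T⟩) hα1) hbound

theorem caputo_nonpos_at_min (T α : ℝ) (hT : 0 < T) (hα0 : 0 < α) (hα1 : α < 1)
    (x x' : ℝ → ℝ)
    (hcont : ContinuousOn x (Icc 0 T))
    (hderiv : ∀ t ∈ Ioc (0 : ℝ) T, HasDerivAt x (x' t) t)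
    (hderiv_cont : ContinuousOn x' (Ioc 0 T))
    (t₁ : ℝ) (ht₁ : t₁ ∈ Ioc (0 : ℝ) T)
    (hmin : ∀ t ∈ Ioc (0 : ℝ) T, x t₁ ≤ x t)
    (hmin0 : x t₁ ≤ x 0) :
    (1 / Real.Gamma (1 - α)) * ∫ τ in (0 : ℝ)..t₁, (t₁ - τ) ^ (-α) * x' τ ≤ 0 :=
  caputo_nonpos_at_min_general T α hα0 hα1 x x' hcont hderiv t₁ ht₁ hmin hmin0
end

section
/- Let $x : [0,\infty) \to \mathbb{R}$ be continuous on $[0,\infty)$ and continuously differentiable on $(0,\infty)$, and suppose $x$ solves $^{C}_{0}D^{\alpha}_{t} x(t) = f(x(t))$ for $t > 0$ with $0 < \alpha < 1$, where $f : \mathbb{R} \to \mathbb{R}$ satisfies $f(u)\,u \le \lambda u^2$ for all $u$ with $\lambda < 0$. If $x(0) > 0$, then $x(t) \ge 0$ for all $t > 0$. -/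
/-!
At a point `t₀ > 0` where `x` attains its minimum over `[0, t₀]`, integration by parts gives
`∫₀^t₀ (t₀ - τ)^(-α) x'(τ) dτ`
`  = [(t₀ - τ)^(-α) (x τ - x t₀)]₀^t₀ - α ∫₀^t₀ (t₀ - τ)^(-α-1) (x τ - x t₀) dτ`.
Both terms on the right are nonpositive; the boundary term at `t₀` vanishes because
`x τ - x t₀ = O(t₀ - τ)` and `α < 1`. As the kernel is singular at `t₀` (and `x'` may be at `0`),
this is done on `[ε, s] ⊂ (0, t₀)` and then `ε → 0`, `s → t₀`. So the Caputo derivative is `≤ 0`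
at `t₀`. If `x` became negative, its minimum over some `[0, t]` would be such a point with
`x t₀ < 0`, where `f (x t₀) > 0` because `f u * u ≤ λ u² < 0`, contradicting the equation.
-/

open Set

/-- The Caputo fractional derivative of order `α` of `x` at time `t`. -/
noncomputable def caputoDeriv (α : ℝ) (x : ℝ → ℝ) (t : ℝ) : ℝ :=
  (1 / Real.Gamma (1 - α)) * ∫ τ in (0 : ℝ)..t, (t - τ) ^ (-α) * deriv x τ

open Filter Topology

theorem ContinuousOn.le_of_forall_sub_le_of_tendsto {F B : ℝ → ℝ} {a b : ℝ}
    (hF : ContinuousOn F (Icc a b)) (hab : a < b)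
    (hle : ∀ ε s, a < ε → ε ≤ s → s < b → F s - F ε ≤ B s)
    (hB : Tendsto B (𝓝[<] b) (𝓝 0)) : F b ≤ F a := by
  have hleft : ∀ s ∈ Ioo a b, F s - F a ≤ B s := by
    intro s hs
    have hFa : Tendsto F (𝓝[>] a) (𝓝 (F a)) := by
      rw [← nhdsWithin_Ioo_eq_nhdsGT hab]
      exact (hF a (left_mem_Icc.2 hab.le)).mono Ioo_subset_Icc_self
    refine le_of_tendsto (tendsto_const_nhds.sub hFa) ?_
    filter_upwards [Ioo_mem_nhdsGT hs.1] with ε hε using hle ε s hε.1 hε.2.le hs.2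
  have hFb : Tendsto F (𝓝[<] b) (𝓝 (F b)) := by
    rw [← nhdsWithin_Ioo_eq_nhdsLT hab]
    exact (hF b (right_mem_Icc.2 hab.le)).mono Ioo_subset_Icc_self
  have : F b - F a ≤ 0 :=
    le_of_tendsto_of_tendsto (hFb.sub_const _) hB
      (eventually_of_mem (Ioo_mem_nhdsLT hab) hleft)
  linarith

theorem tendsto_rpow_neg_mul_sub_nhdsLT {x : ℝ → ℝ} {x' α t₀ : ℝ} (hx : HasDerivAt x x' t₀)
    (hα : α < 1) : Tendsto (fun s => (t₀ - s) ^ (-α) * (x s - x t₀)) (𝓝[<] t₀) (𝓝 0) := by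
  have hbigO : (fun s => (t₀ - s) ^ (-α) * (x s - x t₀)) =O[𝓝[<] t₀]
      fun s => (t₀ - s) ^ (-α) * (s - t₀) :=
    (Asymptotics.isBigO_refl _ _).mul (hx.isBigO_sub.mono nhdsWithin_le_nhds)
  refine hbigO.trans_tendsto ?_
  have hpow : Tendsto (fun s => -(t₀ - s) ^ (1 - α)) (𝓝[<] t₀) (𝓝 0) := by
    have : ContinuousAt (fun s => -(t₀ - s) ^ (1 - α)) t₀ := by fun_prop (disch := linarith)
    simpa [Real.zero_rpow (by linarith : (1 - α) ≠ 0)] using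
      this.tendsto.mono_left nhdsWithin_le_nhds
  refine hpow.congr' ?_
  filter_upwards [self_mem_nhdsWithin] with s (hs : s < t₀)
  rw [Real.rpow_sub (by linarith), Real.rpow_one, Real.rpow_neg (by linarith)]
  field_simp
  ring

theorem integral_rpow_neg_mul_deriv_le_s12 {x : ℝ → ℝ} {α ε s t₀ : ℝ} (hα : 0 ≤ α) (hεs : ε ≤ s)
    (hs : s < t₀) (hdiff : ∀ τ ∈ Icc ε s, DifferentiableAt ℝ x τ)
    (hcont : ContinuousOn (deriv x) (Icc ε s)) (hmin : ∀ τ ∈ Icc ε s, x t₀ ≤ x τ) :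
    ∫ τ in ε..s, (t₀ - τ) ^ (-α) * deriv x τ ≤ (t₀ - s) ^ (-α) * (x s - x t₀) := by
  rw [← uIcc_of_le hεs] at hdiff hcont hmin
  have hpos : ∀ τ ∈ uIcc ε s, 0 < t₀ - τ := fun τ hτ => by
    linarith [(uIcc_of_le hεs ▸ hτ).2]
  have hkernel : ∀ τ ∈ uIcc ε s,
      HasDerivAt (fun τ => (t₀ - τ) ^ (-α)) (α * (t₀ - τ) ^ (-α - 1)) τ := fun τ hτ => by
    convert ((hasDerivAt_id' τ).const_sub t₀).rpow_const (p := -α) (Or.inl (hpos τ hτ).ne')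
      using 1
    ring
  have hkernel_cont : ContinuousOn (fun τ => α * (t₀ - τ) ^ (-α - 1)) (uIcc ε s) :=
    fun τ hτ => (continuousAt_const.mul ((continuousAt_const.sub continuousAt_id).rpow_const
      (Or.inl (hpos τ hτ).ne'))).continuousWithinAt
  have hibp := intervalIntegral.integral_mul_deriv_eq_deriv_mul hkernel
    (fun τ hτ => (hdiff τ hτ).hasDerivAt.sub_const (x t₀))
    hkernel_cont.intervalIntegrable
    hcont.intervalIntegrable
  have hrest : 0 ≤ ∫ τ in ε..s, α * (t₀ - τ) ^ (-α - 1) * (x τ - x t₀) := by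
    refine intervalIntegral.integral_nonneg hεs fun τ hτ => ?_
    rw [← uIcc_of_le hεs] at hτ
    have := hmin τ hτ
    have := hpos τ hτ
    positivity
  have hleft : 0 ≤ (t₀ - ε) ^ (-α) * (x ε - x t₀) := by
    have := hmin ε left_mem_uIcc
    have := hpos ε left_mem_uIcc
    positivity
  linarith

theorem integral_rpow_neg_mul_deriv_nonpos_of_isMinOn {x : ℝ → ℝ} {α a t₀ : ℝ} (hα0 : 0 ≤ α)
    (hα1 : α < 1) (ha : a < t₀) (hdiff : ∀ τ ∈ Ioc a t₀, DifferentiableAt ℝ x τ)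
    (hcont : ContinuousOn (deriv x) (Ioo a t₀)) (hmin : IsMinOn x (Icc a t₀) t₀) :
    ∫ τ in a..t₀, (t₀ - τ) ^ (-α) * deriv x τ ≤ 0 := by
  set h := fun τ => (t₀ - τ) ^ (-α) * deriv x τ
  by_cases hint : IntervalIntegrable h MeasureTheory.volume a t₀
  swap
  · rw [intervalIntegral.integral_undef hint]
  have hint_sub : ∀ b ∈ Icc a t₀, IntervalIntegrable h MeasureTheory.volume a b := fun b hb =>
    hint.mono_set (by rw [uIcc_of_le hb.1, uIcc_of_le ha.le]; exact Icc_subset_Icc_right hb.2)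
  have hprim : ContinuousOn (fun b => ∫ τ in a..b, h τ) (Icc a t₀) := by
    simpa [uIcc_of_le ha.le] using
      intervalIntegral.continuousOn_primitive_interval' hint left_mem_uIcc
  have := hprim.le_of_forall_sub_le_of_tendsto ha (fun ε s hε hεs hs => ?_)
    (tendsto_rpow_neg_mul_sub_nhdsLT (hdiff t₀ ⟨ha, le_rfl⟩).hasDerivAt hα1)
  · simpa using this
  rw [intervalIntegral.integral_interval_sub_left (hint_sub s ⟨by linarith, hs.le⟩)
    (hint_sub ε ⟨hε.le, by linarith⟩)]
  have hsub : Icc ε s ⊆ Ioo a t₀ := Icc_subset_Ioo hε hs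
  exact integral_rpow_neg_mul_deriv_le_s12 hα0 hεs hs
    (fun τ hτ => hdiff τ (Ioo_subset_Ioc_self (hsub hτ))) (hcont.mono hsub)
    fun τ hτ => hmin (Ioo_subset_Icc_self (hsub hτ))

theorem caputoDeriv_nonpos_of_isMinOn {x : ℝ → ℝ} {α t₀ : ℝ} (hα0 : 0 ≤ α) (hα1 : α < 1)
    (ht₀ : 0 < t₀) (hdiff : ∀ τ ∈ Ioc 0 t₀, DifferentiableAt ℝ x τ)
    (hcont : ContinuousOn (deriv x) (Ioo 0 t₀)) (hmin : IsMinOn x (Icc 0 t₀) t₀) :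
    caputoDeriv α x t₀ ≤ 0 := by
  have := Real.Gamma_pos_of_pos (by linarith : 0 < 1 - α)
  exact mul_nonpos_of_nonneg_of_nonpos (by positivity)
    (integral_rpow_neg_mul_deriv_nonpos_of_isMinOn hα0 hα1 ht₀ hdiff hcont hmin)

theorem caputo_fode_nonneg_preservation (α : ℝ) (hα0 : 0 < α) (hα1 : α < 1)
    (f : ℝ → ℝ) (lam : ℝ) (hlam : lam < 0)
    (hf : ∀ u : ℝ, f u * u ≤ lam * u ^ 2)
    (x : ℝ → ℝ)
    (hcont : ContinuousOn x (Ici 0))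
    (hdiff : ∀ t ∈ Ioi (0 : ℝ), DifferentiableAt ℝ x t)
    (hderiv_cont : ContinuousOn (deriv x) (Ioi 0))
    (hode : ∀ t : ℝ, 0 < t → caputoDeriv α x t = f (x t))
    (hx0 : 0 < x 0) :
    ∀ t : ℝ, 0 < t → 0 ≤ x t := by
  intro t ht
  by_contra! hneg
  obtain ⟨t₀, ht₀, hmin⟩ := isCompact_Icc.exists_isMinOn (nonempty_Icc.2 ht.le)
    (hcont.mono Icc_subset_Ici_self)
  have hxt₀ : x t₀ < 0 := (hmin ⟨ht.le, le_rfl⟩).trans_lt hneg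
  have ht₀_pos : 0 < t₀ := ht₀.1.lt_of_ne (by rintro rfl; linarith)
  have hf_pos : 0 < f (x t₀) :=
    pos_of_mul_neg_left ((hf _).trans_lt (mul_neg_of_neg_of_pos hlam (sq_pos_of_neg hxt₀))) hxt₀.le
  have := caputoDeriv_nonpos_of_isMinOn hα0.le hα1 ht₀_pos (fun τ hτ => hdiff τ hτ.1)
    (hderiv_cont.mono Ioo_subset_Ioi_self) (hmin.on_subset (Icc_subset_Icc_right ht₀.2))
  linarith [hode t₀ ht₀_pos]
end

section
/- Let $(F_n)_{n \ge 0}$ be a real sequence with $\rho := \sum_{j=0}^{\infty} |F_j| < 1$, let $(f_n)$ be a real sequence converging to a limit $f_\infty$, and let $(x_n)$ satisfy the convolution Volterra difference equation $x_{n+1} = f_n + \sum_{j=0}^{n} F_{n-j} x_j$ for $n \ge 1$. Then $(x_n)$ converges, with $\lim_{n\to\infty} x_n = (1 - \sum_{j=0}^{\infty} F_j)^{-1} f_\infty$. -/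
/-!
With `L = (1 - ∑ F)⁻¹ f∞`, the error `e n = x n - L` satisfies the same convolution equation
with a forcing term tending to `0`. Since `∑ |F j| = ρ < 1`, a strong induction bounds `e`.
If `|e n| ≤ B` eventually, split `|e n| ≤ B + v n` with `v` eventually zero: the convolution of
`|F|` with `v` tends to `0` (an `ℓ¹` kernel maps null sequences to null sequences, by Tannery's
theorem), so `|e n| ≤ ρ B + δ` eventually for every `δ > 0`. Iterating this contraction gives
`e n → 0`.
-/

open Filter Topology Finset

theorem tendsto_sum_range_mul_of_tendsto_zero {a b : ℕ → ℝ} (ha : Summable a)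
    (hb : Tendsto b atTop (𝓝 0)) :
    Tendsto (fun n => ∑ i ∈ range (n + 1), a i * b (n - i)) atTop (𝓝 0) := by
  obtain ⟨C, hC⟩ := hb.norm.bddAbove_range
  let term : ℕ → ℕ → ℝ := fun n i => if i ≤ n then a i * b (n - i) else 0
  have hsum : ∀ n, ∑' i, term n i = ∑ i ∈ range (n + 1), a i * b (n - i) := fun n => by
    rw [tsum_eq_sum (s := range (n + 1)) fun i hi => if_neg (by simpa using hi)]
    exact sum_congr rfl fun i hi => if_pos (by simpa [Nat.lt_succ_iff] using hi)
  have hterm : ∀ i, Tendsto (term · i) atTop (𝓝 0) := fun i => by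
    have : Tendsto (fun n => a i * b (n - i)) atTop (𝓝 0) := by
      simpa using (hb.comp (tendsto_sub_atTop_nat i)).const_mul (a i)
    exact this.congr' ((eventually_ge_atTop i).mono fun n hn => (if_pos hn).symm)
  have hbound : ∀ n i, ‖term n i‖ ≤ ‖a i‖ * C := fun n i => by
    by_cases hi : i ≤ n
    · simpa [term, hi, norm_mul] using
        mul_le_mul_of_nonneg_left (hC ⟨n - i, rfl⟩) (norm_nonneg (a i))
    · simpa [term, hi] using mul_nonneg (norm_nonneg (a i)) ((norm_nonneg _).trans (hC ⟨0, rfl⟩))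
  simpa [hsum] using tendsto_tsum_of_dominated_convergence (ha.norm.mul_right C) hterm
    (Eventually.of_forall (hbound ·))

theorem tendsto_zero_of_eventually_le_of_contracting {α : Type*} {l : Filter α} {u : α → ℝ}
    {ρ : ℝ} (hρ₀ : 0 ≤ ρ) (hρ : ρ < 1) (hu : ∀ a, 0 ≤ u a) {B : ℝ} (hB₀ : 0 ≤ B)
    (hB : ∀ᶠ a in l, u a ≤ B)
    (hstep : ∀ B, 0 ≤ B → (∀ᶠ a in l, u a ≤ B) → ∀ B' > ρ * B, ∀ᶠ a in l, u a ≤ B') :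
    Tendsto u l (𝓝 0) := by
  have hiter : ∀ k : ℕ, ∀ c > ρ ^ k * B, ∀ᶠ a in l, u a ≤ c := by
    intro k
    induction k with
    | zero => exact fun c hc => hB.mono fun a ha => ha.trans (by simpa using hc.le)
    | succ k ih =>
      intro c hc
      obtain ⟨d, hd, rfl⟩ : ∃ d > 0, c = ρ ^ (k + 1) * B + d := ⟨_, sub_pos.2 hc, by ring⟩
      refine hstep _ (by positivity) (ih (ρ ^ k * B + d) (by linarith)) _ ?_
      have := mul_lt_of_lt_one_left hd hρ
      rw [pow_succ]
      linarith
  refine tendsto_order.2 ⟨fun a' ha' => Eventually.of_forall fun a => ha'.trans_le (hu a),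
    fun ε hε => ?_⟩
  obtain ⟨k, hk⟩ := ((tendsto_pow_atTop_nhds_zero_of_lt_one hρ₀ hρ).mul_const B
    |>.eventually (gt_mem_nhds (by simpa using hε))).exists
  exact (hiter k ((ρ ^ k * B + ε) / 2) (by linarith)).mono fun a ha => by linarith

section VolterraInequality

variable {K u w : ℕ → ℝ} {ρ : ℝ} {N : ℕ}

theorem sum_mul_const_le_of_hasSum (hK₀ : ∀ i, 0 ≤ K i) (hK : HasSum K ρ) {B : ℝ} (hB : 0 ≤ B)
    (s : Finset ℕ) : ∑ i ∈ s, K i * B ≤ ρ * B := by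
  rw [← sum_mul]
  exact mul_le_mul_of_nonneg_right (sum_le_hasSum s (fun i _ => hK₀ i) hK) hB

theorem bddAbove_range_of_volterra_le (hK₀ : ∀ i, 0 ≤ K i) (hK : HasSum K ρ) (hρ : ρ < 1)
    (hu₀ : ∀ n, 0 ≤ u n) (hw : BddAbove (Set.range w))
    (hu : ∀ n ≥ N, u (n + 1) ≤ w n + ∑ i ∈ range (n + 1), K i * u (n - i)) :
    BddAbove (Set.range u) := by
  obtain ⟨G, hG⟩ := hw
  obtain ⟨C, hC⟩ := ((Set.finite_Iic N).image u).bddAbove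
  set M := max C (G / (1 - ρ))
  have hM₀ : 0 ≤ M := (hu₀ 0).trans <| (hC ⟨0, Nat.zero_le N, rfl⟩).trans (le_max_left _ _)
  have hGM : G + ρ * M ≤ M := by
    have := (div_le_iff₀ (sub_pos.2 hρ)).1 (le_max_right C (G / (1 - ρ)))
    linarith
  refine ⟨M, Set.forall_mem_range.2 fun n => ?_⟩
  induction n using Nat.strong_induction_on with
  | _ n ih =>
    rcases le_or_gt n N with hn | hn
    · exact (hC ⟨n, hn, rfl⟩).trans (le_max_left _ _)
    obtain ⟨m, rfl⟩ : ∃ m, n = m + 1 := ⟨n - 1, by omega⟩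
    calc u (m + 1) ≤ w m + ∑ i ∈ range (m + 1), K i * u (m - i) := hu m (by omega)
      _ ≤ G + ∑ i ∈ range (m + 1), K i * M := by
        refine add_le_add (hG ⟨m, rfl⟩) (sum_le_sum fun i hi => ?_)
        exact mul_le_mul_of_nonneg_left (ih _ (by simp at hi; omega)) (hK₀ i)
      _ ≤ G + ρ * M := by grw [sum_mul_const_le_of_hasSum hK₀ hK hM₀]
      _ ≤ M := hGM

theorem eventually_le_of_volterra_le (hK₀ : ∀ i, 0 ≤ K i) (hK : HasSum K ρ)
    (hw : Tendsto w atTop (𝓝 0))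
    (hu : ∀ n ≥ N, u (n + 1) ≤ w n + ∑ i ∈ range (n + 1), K i * u (n - i))
    {B : ℝ} (hB₀ : 0 ≤ B) (hB : ∀ᶠ n in atTop, u n ≤ B) {B' : ℝ} (hB' : ρ * B < B') :
    ∀ᶠ n in atTop, u n ≤ B' := by
  set v := fun n => max (u n - B) 0
  have hv : Tendsto v atTop (𝓝 0) :=
    tendsto_const_nhds.congr' (hB.mono fun n hn => (max_eq_right (by linarith)).symm)
  have hsmall : ∀ᶠ n in atTop, w n + ∑ i ∈ range (n + 1), K i * v (n - i) < B' - ρ * B := by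
    have := hw.add (tendsto_sum_range_mul_of_tendsto_zero hK.summable hv)
    exact this.eventually (gt_mem_nhds (by simpa using hB'))
  suffices ∀ᶠ n in atTop, u (n + 1) ≤ B' by rwa [← map_add_atTop_eq_nat 1]
  filter_upwards [hsmall, eventually_ge_atTop N] with n hn hnN
  calc u (n + 1) ≤ w n + ∑ i ∈ range (n + 1), K i * u (n - i) := hu n hnN
    _ ≤ w n + ∑ i ∈ range (n + 1), (K i * B + K i * v (n - i)) := by
      gcongr with i
      rw [← mul_add]
      exact mul_le_mul_of_nonneg_left (sub_le_iff_le_add'.1 (le_max_left _ _)) (hK₀ i)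
    _ ≤ ρ * B + (w n + ∑ i ∈ range (n + 1), K i * v (n - i)) := by
      rw [sum_add_distrib]
      linarith [sum_mul_const_le_of_hasSum hK₀ hK hB₀ (range (n + 1))]
    _ ≤ B' := by linarith

end VolterraInequality

theorem norm_sum_range_smul_reflect_le {E : Type*} [SeminormedAddCommGroup E] [NormedSpace ℝ E]
    (K : ℕ → ℝ) (e : ℕ → E) (n : ℕ) :
    ‖∑ j ∈ range (n + 1), K (n - j) • e j‖ ≤ ∑ i ∈ range (n + 1), |K i| * ‖e (n - i)‖ :=
  calc ‖∑ j ∈ range (n + 1), K (n - j) • e j‖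
      ≤ ∑ j ∈ range (n + 1), |K (n - j)| * ‖e j‖ :=
        (norm_sum_le _ _).trans_eq (sum_congr rfl fun j _ => by rw [norm_smul, Real.norm_eq_abs])
    _ = ∑ i ∈ range (n + 1), |K i| * ‖e (n - i)‖ := by
        rw [← sum_range_reflect]
        refine sum_congr rfl fun j hj => ?_
        rw [Nat.add_sub_cancel, Nat.sub_sub_self (by simpa [Nat.lt_succ_iff] using hj)]

theorem tendsto_zero_of_volterra {E : Type*} [SeminormedAddCommGroup E] [NormedSpace ℝ E]
    {K : ℕ → ℝ} {g e : ℕ → E} {ρ : ℝ} {N : ℕ} (hK : HasSum (fun i => |K i|) ρ) (hρ : ρ < 1)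
    (hg : Tendsto g atTop (𝓝 0))
    (he : ∀ n ≥ N, e (n + 1) = g n + ∑ j ∈ range (n + 1), K (n - j) • e j) :
    Tendsto e atTop (𝓝 0) := by
  have hK₀ : ∀ i, 0 ≤ |K i| := fun i => abs_nonneg (K i)
  have hg' := tendsto_zero_iff_norm_tendsto_zero.1 hg
  have hu : ∀ n ≥ N, ‖e (n + 1)‖ ≤ ‖g n‖ + ∑ i ∈ range (n + 1), |K i| * ‖e (n - i)‖ :=
    fun n hn => by
      rw [he n hn]
      exact (norm_add_le _ _).trans (add_le_add le_rfl (norm_sum_range_smul_reflect_le K e n))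
  obtain ⟨M, hM⟩ := bddAbove_range_of_volterra_le hK₀ hK hρ (fun n => norm_nonneg (e n))
    hg'.bddAbove_range hu
  refine tendsto_zero_iff_norm_tendsto_zero.2 <| tendsto_zero_of_eventually_le_of_contracting
    (hK.nonneg hK₀) hρ (fun n => norm_nonneg (e n)) ((norm_nonneg (e 0)).trans (hM ⟨0, rfl⟩))
    (Eventually.of_forall fun n => hM ⟨n, rfl⟩) fun B hB₀ hB B' hB' => ?_
  exact eventually_le_of_volterra_le hK₀ hK hg' hu hB₀ hB hB'

theorem volterra_convolution_limit
    (F f : ℕ → ℝ) (ρ : ℝ) (hρ : HasSum (fun j => |F j|) ρ) (hρ1 : ρ < 1)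
    (finf : ℝ) (hf : Tendsto f atTop (nhds finf))
    (x : ℕ → ℝ)
    (hx : ∀ n : ℕ, 1 ≤ n → x (n + 1) = f n + ∑ j ∈ Finset.range (n + 1), F (n - j) * x j) :
    Tendsto x atTop (nhds ((1 - ∑' j, F j)⁻¹ * finf)) := by
  have hF : HasSum F (∑' j, F j) := hρ.summable.of_abs.hasSum
  have hS : 1 - ∑' j, F j ≠ 0 := by linarith [hasSum_le (fun j => le_abs_self (F j)) hF hρ]
  set L := (1 - ∑' j, F j)⁻¹ * finf
  set g := fun n => f n - L + L * ∑ i ∈ range (n + 1), F i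
  have hg : Tendsto g atTop (𝓝 0) := by
    have := (hf.sub_const L).add ((hF.tendsto_sum_nat.comp (tendsto_add_atTop_nat 1)).const_mul L)
    have hlim : finf - L + L * ∑' j, F j = 0 := by
      have : L * (1 - ∑' j, F j) = finf := by
        rw [mul_comm, ← mul_assoc, mul_inv_cancel₀ hS, one_mul]
      linarith
    rwa [hlim] at this
  have he : ∀ n ≥ 1, x (n + 1) - L = g n + ∑ j ∈ range (n + 1), F (n - j) • (x j - L) := by
    intro n hn
    have hrefl : ∑ j ∈ range (n + 1), F (n - j) = ∑ i ∈ range (n + 1), F i := by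
      simpa using sum_range_reflect F (n + 1)
    simp only [hx n hn, g, smul_eq_mul, mul_sub, sum_sub_distrib, ← sum_mul, hrefl]
    ring
  simpa using (tendsto_zero_of_volterra (e := fun n => x n - L) hρ hρ1 hg he).add_const L
end

section
/- Let $\{\omega_j\}$ be weights with $\omega_0 > 0$, $\omega_j \le 0$ for $j \ge 1$, and $\sum_{j=0}^n \omega_j \ge 0$ for all $n \ge 1$. Let $f : \mathbb{R}^d \to \mathbb{R}^d$ satisfy $\langle f(x)-f(y), x-y\rangle \le \lambda\|x-y\|^2$ with $\lambda \le 0$, and suppose $(x_n)$, $(y_n)$ satisfy the implicit scheme $\sum_{j=0}^n \omega_{n-j} x_j = h^\alpha f(x_n)$, $\sum_{j=0}^n \omega_{n-j} y_j = h^\alpha f(y_n)$ for all $n \ge 1$, $h^\alpha > 0$. Then the sequence $(\|x_n - y_n\|)_{n \ge 0}$ satisfies $\|x_n - y_n\| \le \max_{0 \le j \le n-1} \|x_j - y_j\|$ for all $n \ge 1$; in particular $\|x_n - y_n\| \le \|x_0 - y_0\|$ for all $n$. -/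
/-! Testing the scheme for the difference `z = x - y` against `z n` and using the one-sided
Lipschitz bound gives `ω 0 ‖z n‖² ≤ ∑_{j<n} |ω (n-j)| ⟪z j, z n⟫`. Since the weights
`|ω (n-j)|` sum to at most `ω 0`, Cauchy–Schwarz yields `‖z n‖² ≤ (max_{j<n} ‖z j‖) ‖z n‖`,
and strong induction gives contractivity. -/

open Finset RealInnerProductSpace

lemma sum_range_reflect_eq_sum_range_succ_sub (ω : ℕ → ℝ) (n : ℕ) :
    ∑ j ∈ range n, ω (n - j) = ∑ j ∈ range (n + 1), ω j - ω 0 := by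
  rw [sum_range_succ', ← sum_range_reflect (fun i => ω (i + 1)) n, add_sub_cancel_right]
  refine sum_congr rfl fun j hj => congrArg ω ?_
  have := mem_range.mp hj
  omega

section

variable {E : Type*} [NormedAddCommGroup E] [InnerProductSpace ℝ E]

lemma inner_smul_sub_nonpos_of_one_sided_lipschitz {f : E → E} {lam c : ℝ} (hlam : lam ≤ 0)
    (hf : ∀ x y, ⟪f x - f y, x - y⟫ ≤ lam * ‖x - y‖ ^ 2) (hc : 0 ≤ c) (u v : E) :
    ⟪c • (f u - f v), u - v⟫ ≤ 0 := by
  rw [real_inner_smul_left]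
  exact mul_nonpos_of_nonneg_of_nonpos hc
    ((hf u v).trans (mul_nonpos_of_nonpos_of_nonneg hlam (sq_nonneg _)))

lemma norm_le_of_inner_weighted_sum_nonpos {ω : ℕ → ℝ} {z : ℕ → E} {n : ℕ} {M : ℝ}
    (hω0 : 0 < ω 0) (hωneg : ∀ j, 1 ≤ j → ω j ≤ 0) (hsum : 0 ≤ ∑ j ∈ range (n + 1), ω j)
    (hM0 : 0 ≤ M) (hM : ∀ j < n, ‖z j‖ ≤ M)
    (hz : ⟪∑ j ∈ range (n + 1), ω (n - j) • z j, z n⟫ ≤ 0) :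
    ‖z n‖ ≤ M := by
  have hterm : ∀ j ∈ range n, -ω (n - j) * ⟪z j, z n⟫ ≤ -ω (n - j) * (M * ‖z n‖) := by
    intro j hj
    have hωj : 0 ≤ -ω (n - j) := neg_nonneg.mpr (hωneg _ (by have := mem_range.mp hj; omega))
    refine mul_le_mul_of_nonneg_left ((real_inner_le_norm _ _).trans ?_) hωj
    exact mul_le_mul_of_nonneg_right (hM j (mem_range.mp hj)) (norm_nonneg _)
  have hsplit : ⟪∑ j ∈ range (n + 1), ω (n - j) • z j, z n⟫
      = ∑ j ∈ range n, ω (n - j) * ⟪z j, z n⟫ + ω 0 * ‖z n‖ ^ 2 := by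
    rw [sum_range_succ, Nat.sub_self, inner_add_left, sum_inner, real_inner_smul_left,
      real_inner_self_eq_norm_sq]
    simp only [real_inner_smul_left]
  have hsq : ω 0 * ‖z n‖ ^ 2 ≤ ω 0 * (M * ‖z n‖) :=
    calc ω 0 * ‖z n‖ ^ 2 ≤ ∑ j ∈ range n, -ω (n - j) * ⟪z j, z n⟫ := by
          simp only [neg_mul, sum_neg_distrib]; linarith
      _ ≤ ∑ j ∈ range n, -ω (n - j) * (M * ‖z n‖) := sum_le_sum hterm
      _ = (ω 0 - ∑ j ∈ range (n + 1), ω j) * (M * ‖z n‖) := by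
          rw [← sum_mul, sum_neg_distrib, sum_range_reflect_eq_sum_range_succ_sub]; ring
      _ ≤ ω 0 * (M * ‖z n‖) := by
          gcongr
          linarith
  have := le_of_mul_le_mul_left hsq hω0
  nlinarith [norm_nonneg (z n)]

end

theorem fbdf_numerical_contractivity {d : ℕ}
    (ω : ℕ → ℝ) (hω0 : 0 < ω 0) (hωneg : ∀ j, 1 ≤ j → ω j ≤ 0)
    (hsum : ∀ n : ℕ, 1 ≤ n → 0 ≤ ∑ j ∈ Finset.range (n + 1), ω j)
    (f : EuclideanSpace ℝ (Fin d) → EuclideanSpace ℝ (Fin d)) (lam : ℝ) (hlam : lam ≤ 0)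
    (hf : ∀ x y, (inner ℝ (f x - f y) (x - y) : ℝ) ≤ lam * ‖x - y‖ ^ 2)
    (hα : ℝ) (hhα : 0 < hα)
    (x y : ℕ → EuclideanSpace ℝ (Fin d))
    (hx : ∀ n : ℕ, 1 ≤ n → ∑ j ∈ Finset.range (n + 1), ω (n - j) • x j = hα • f (x n))
    (hy : ∀ n : ℕ, 1 ≤ n → ∑ j ∈ Finset.range (n + 1), ω (n - j) • y j = hα • f (y n)) :
    (∀ n : ℕ, ∀ hn : 1 ≤ n,
      ‖x n - y n‖ ≤ (Finset.range n).sup' (Finset.nonempty_range_iff.mpr (by omega))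
        (fun j => ‖x j - y j‖)) ∧
    (∀ n : ℕ, ‖x n - y n‖ ≤ ‖x 0 - y 0‖) := by
  have step : ∀ n, 1 ≤ n → ∀ M, 0 ≤ M → (∀ j < n, ‖x j - y j‖ ≤ M) → ‖x n - y n‖ ≤ M := by
    intro n hn M hM0 hM
    have hdiff : ∑ j ∈ range (n + 1), ω (n - j) • (x j - y j) = hα • (f (x n) - f (y n)) := by
      simp only [smul_sub, sum_sub_distrib, hx n hn, hy n hn]
    refine norm_le_of_inner_weighted_sum_nonpos hω0 hωneg (hsum n hn) hM0 hM ?_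
    rw [hdiff]
    exact inner_smul_sub_nonpos_of_one_sided_lipschitz hlam hf hhα.le _ _
  refine ⟨fun n hn => step n hn _ ?_ fun j hj => le_sup' (fun j => ‖x j - y j‖) (mem_range.2 hj),
    fun n => ?_⟩
  · exact (norm_nonneg _).trans (le_sup' (fun j => ‖x j - y j‖) (mem_range.2 hn))
  induction n using Nat.strong_induction_on with
  | _ n ih =>
    rcases Nat.eq_zero_or_pos n with rfl | hn
    · exact le_rfl
    · exact step n hn _ (norm_nonneg _) ih
end
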